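/- For each integer n ≥ 2, let T_1, …, T_n be independent random variables with T_i exponentially distributed with rate i, and let K be an independent random index in {1, …, n−1} with P(K = k) = 2(n+1)/((n−1)(k+2)(k+1)); set τ^{(n)} = T_{K+1} + … + T_n. Then for every real y > 1, lim_{n→∞} n · E[exp(−y·τ^{(n)})] = 2/(y−1). -/

import Mathlib

/-!
Conditioning on `K` and using independence, `E[e^{-yτ}] = ∑ₖ P(K = k) ∏_{i=k+1}^n i/(i+y)`.
Against the weights `1/((k+1)(k+2))` this sum telescopes, leaving
`n E[e^{-yτ}] = 2/(y-1) · n/(n-1) · (1 - (1+y)/2 · (n+1) ∏_{i=1}^n i/(i+y))`.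
By Euler's limit formula for `Γ`, `∏_{i=1}^n i/(i+y) ~ Γ(y+1) n^{-y}`, which is `o(1/n)` as `y > 1`.
-/

open MeasureTheory ProbabilityTheory Filter Topology

lemma Finset.prod_Icc_one_eq_prod_range {M : Type*} [CommMonoid M] (f : ℕ → M) (n : ℕ) :
    ∏ i ∈ Icc 1 n, f i = ∏ j ∈ range n, f (j + 1) := by
  rw [range_eq_Ico, prod_Ico_add', Ico_add_one_right_eq_Icc, zero_add]

lemma Finset.prod_Icc_eq_mul_prod_Icc_succ {M : Type*} [CommMonoid M] {a b : ℕ} (hab : a ≤ b)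
    (f : ℕ → M) : ∏ i ∈ Icc a b, f i = f a * ∏ i ∈ Icc (a + 1) b, f i := by
  rw [← Ico_add_one_right_eq_Icc, prod_eq_prod_Ico_succ_bot (by omega), Ico_add_one_right_eq_Icc]

lemma Fin.sum_filter_le_eq_sum_Icc {M : Type*} [AddCommMonoid M] (f : ℕ → M) (n k : ℕ) :
    ∑ j ∈ Finset.univ.filter (fun j : Fin n => k ≤ (j : ℕ)), f (j + 1)
      = ∑ i ∈ Finset.Icc (k + 1) n, f i := by
  rw [Finset.sum_filter, Fin.sum_univ_eq_sum_range (fun j => if k ≤ j then f (j + 1) else 0),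
    ← Finset.sum_filter,
    show (Finset.range n).filter (k ≤ ·) = Finset.Ico k n by ext; simp; omega,
    Finset.sum_Ico_add', Finset.Ico_add_one_right_eq_Icc]

lemma rpow_mul_prod_Icc_div_add_eq_mul_GammaSeq {y : ℝ} (hy : 0 < y) {n : ℕ} (hn : n ≠ 0) :
    (n : ℝ) ^ y * ∏ i ∈ Finset.Icc 1 n, (i : ℝ) / (i + y) = y * Real.GammaSeq y n := by
  have hpos : ∀ j ∈ Finset.range n, (0 : ℝ) < ((j + 1 : ℕ) : ℝ) + y := fun j _ => by positivity
  rw [Real.GammaSeq, Finset.prod_range_succ', Finset.prod_Icc_one_eq_prod_range,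
    Finset.prod_div_distrib, Nat.factorial_eq_prod_range_add_one]
  simp only [Nat.cast_prod, Nat.cast_zero, add_zero]
  rw [Finset.prod_congr rfl fun j _ => add_comm y ((j + 1 : ℕ) : ℝ)]
  have := (Finset.prod_pos hpos).ne'
  field_simp

lemma tendsto_rpow_mul_prod_Icc_div_add {y : ℝ} (hy : 0 < y) :
    Tendsto (fun n : ℕ => (n : ℝ) ^ y * ∏ i ∈ Finset.Icc 1 n, (i : ℝ) / (i + y)) atTop
      (𝓝 (Real.Gamma (y + 1))) := by
  rw [Real.Gamma_add_one hy.ne']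
  refine ((Real.GammaSeq_tendsto_Gamma y).const_mul y).congr' ?_
  filter_upwards [eventually_ne_atTop 0] with n hn
  exact (rpow_mul_prod_Icc_div_add_eq_mul_GammaSeq hy hn).symm

lemma mgf_id_expMeasure {r t : ℝ} (hr : 0 < r) (ht : t < r) :
    mgf id (expMeasure r) t = r / (r - t) := by
  have hrt : 0 < r - t := by linarith
  have hmeas : Measurable fun x : ℝ => Real.exp (t * x) := by fun_prop
  have hdensity : ∀ x, exponentialPDF r x * ENNReal.ofReal (Real.exp (t * x))
      = ENNReal.ofReal (r / (r - t)) * exponentialPDF (r - t) x := by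
    intro x
    simp only [exponentialPDF_eq]
    split_ifs
    · rw [← ENNReal.ofReal_mul (by positivity), ← ENNReal.ofReal_mul (by positivity),
        show -((r - t) * x) = -(r * x) + t * x by ring, Real.exp_add]
      field_simp
    · simp
  simp only [mgf, id]
  rw [integral_eq_lintegral_of_nonneg_ae (.of_forall fun x => (Real.exp_pos _).le)
      hmeas.aestronglyMeasurable, expMeasure, gammaMeasure,
    lintegral_withDensity_eq_lintegral_mul _
      (show Measurable (gammaPDF 1 r) from (measurable_gammaPDFReal 1 r).ennreal_ofReal)
      hmeas.ennreal_ofReal]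
  change (∫⁻ x, exponentialPDF r x * _).toReal = _
  rw [lintegral_congr hdensity, lintegral_const_mul _ (show Measurable (exponentialPDF (r - t))
      from (measurable_exponentialPDFReal _).ennreal_ofReal),
    lintegral_exponentialPDF_eq_one hrt, mul_one, ENNReal.toReal_ofReal (by positivity)]

lemma ae_nonneg_of_map_eq_expMeasure {Ω : Type*} [MeasurableSpace Ω] {μ : Measure Ω}
    {X : Ω → ℝ} {r : ℝ} (hX : Measurable X) (hlaw : μ.map X = expMeasure r) :
    ∀ᵐ ω ∂μ, 0 ≤ X ω := by
  refine ae_of_ae_map hX.aemeasurable ?_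
  rw [hlaw, ae_iff]
  simp only [not_le]
  exact (withDensity_apply _ measurableSet_Iio).trans (lintegral_exponentialPDF_of_nonpos le_rfl)

section SumOfExponentials

variable {Ω ι : Type*} [MeasurableSpace Ω] {μ : Measure Ω} {X : ι → Ω → ℝ} {r : ι → ℝ}
  {s : Finset ι}

lemma ProbabilityTheory.iIndepFun.mgf_sum_of_expMeasure (hmeas : ∀ i, Measurable (X i))
    (hindep : iIndepFun X μ) (hlaw : ∀ i ∈ s, μ.map (X i) = expMeasure (r i))
    (hr : ∀ i ∈ s, 0 < r i) {t : ℝ} (ht : ∀ i ∈ s, t < r i) :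
    mgf (∑ i ∈ s, X i) μ t = ∏ i ∈ s, r i / (r i - t) := by
  rw [hindep.mgf_sum hmeas]
  refine Finset.prod_congr rfl fun i hi => ?_
  rw [← mgf_id_map (hmeas i).aemeasurable, hlaw i hi, mgf_id_expMeasure (hr i hi) (ht i hi)]

lemma ProbabilityTheory.iIndepFun.integral_exp_neg_mul_sum_of_expMeasure
    (hmeas : ∀ i, Measurable (X i)) (hindep : iIndepFun X μ)
    (hlaw : ∀ i ∈ s, μ.map (X i) = expMeasure (r i)) (hr : ∀ i ∈ s, 0 < r i) {y : ℝ}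
    (hy : ∀ i ∈ s, 0 < r i + y) :
    ∫ ω, Real.exp (-y * ∑ i ∈ s, X i ω) ∂μ = ∏ i ∈ s, r i / (r i + y) := by
  have h := hindep.mgf_sum_of_expMeasure hmeas hlaw hr (t := -y) fun i hi => by
    linarith [hy i hi]
  simp only [mgf, Finset.sum_apply, sub_neg_eq_add] at h
  exact h

lemma integrable_exp_neg_mul_sum_of_expMeasure [IsFiniteMeasure μ]
    (hmeas : ∀ i, Measurable (X i)) (hlaw : ∀ i ∈ s, μ.map (X i) = expMeasure (r i)) {y : ℝ}
    (hy : 0 ≤ y) : Integrable (fun ω => Real.exp (-y * ∑ i ∈ s, X i ω)) μ := by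
  refine .of_bound (by fun_prop) 1 ?_
  have hnonneg : ∀ᵐ ω ∂μ, ∀ i ∈ s, 0 ≤ X i ω :=
    s.eventually_all.2 fun i hi => ae_nonneg_of_map_eq_expMeasure (hmeas i) (hlaw i hi)
  filter_upwards [hnonneg] with ω hω
  rw [Real.norm_of_nonneg (Real.exp_pos _).le, Real.exp_le_one_iff]
  exact mul_nonpos_of_nonpos_of_nonneg (neg_nonpos.2 hy) (Finset.sum_nonneg hω)

end SumOfExponentials

lemma integral_comp_eq_sum_of_indepFun {Ω β κ : Type*} [MeasurableSpace Ω] [MeasurableSpace β]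
    [MeasurableSpace κ] [MeasurableSingletonClass κ] {μ : Measure Ω}
    {V : Ω → β} {K : Ω → κ} (hV : Measurable V) (hK : Measurable K) (hVK : IndepFun V K μ)
    {S : Finset κ} (hKS : ∀ ω, K ω ∈ S) {φ : κ → β → ℝ} (hφ : ∀ k ∈ S, Measurable (φ k))
    (hint : ∀ k ∈ S, Integrable (fun ω => φ k (V ω)) μ) :
    ∫ ω, φ (K ω) (V ω) ∂μ = ∑ k ∈ S, μ.real {ω | K ω = k} * ∫ ω, φ k (V ω) ∂μ := by
  classical
  have hdecomp : ∀ ω, φ (K ω) (V ω)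
      = ∑ k ∈ S, φ k (V ω) * ({k} : Set κ).indicator 1 (K ω) := by
    intro ω
    simp only [Set.indicator_apply, Set.mem_singleton_iff, Pi.one_apply, mul_ite, mul_one,
      mul_zero, Finset.sum_ite_eq, hKS ω, if_true]
  have hind : ∀ k, Measurable (({k} : Set κ).indicator (1 : κ → ℝ)) := fun k =>
    measurable_one.indicator (measurableSet_singleton k)
  simp_rw [hdecomp]
  rw [integral_finsetSum _ fun k hk => (hint k hk).mul_bdd
    (g := fun ω => ({k} : Set κ).indicator 1 (K ω)) ((hind k).comp hK).aestronglyMeasurable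
    (.of_forall fun ω => (norm_indicator_le_norm_self _ _).trans norm_one.le)]
  refine Finset.sum_congr rfl fun k hk => ?_
  refine ((hVK.comp (hφ k hk) (hind k)).integral_fun_mul_eq_mul_integral
    ((hφ k hk).comp hV).aestronglyMeasurable ((hind k).comp hK).aestronglyMeasurable).trans ?_
  change _ = μ.real (K ⁻¹' {k}) * _
  rw [mul_comm, ← integral_indicator_one (hK (measurableSet_singleton k))]
  rfl

/-- `E[e^{-y (T_{k+1} + ⋯ + T_n)}]` for independent `T_i` exponential of rate `i`. -/
noncomputable def laplaceTail (n : ℕ) (y : ℝ) (k : ℕ) : ℝ :=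
  ∏ i ∈ Finset.Icc (k + 1) n, (i : ℝ) / (i + y)

lemma integral_exp_neg_mul_sum_Icc_eq_sum_laplaceTail {Ω : Type*} [MeasurableSpace Ω]
    {μ : Measure Ω} {n : ℕ} {T : ℕ → Ω → ℝ} {K : Ω → ℕ}
    (hTmeas : ∀ i, Measurable (T i)) (hTindep : iIndepFun T μ)
    (hTexp : ∀ i ∈ Finset.Icc 1 n, μ.map (T i) = expMeasure i) (hKmeas : Measurable K)
    (hKindep : IndepFun (fun ω (i : Fin n) => T (i + 1) ω) K μ) {S : Finset ℕ}
    (hKS : ∀ ω, K ω ∈ S) {y : ℝ} (hy : 0 < y) :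
    ∫ ω, Real.exp (-y * ∑ i ∈ Finset.Icc (K ω + 1) n, T i ω) ∂μ
      = ∑ k ∈ S, μ.real {ω | K ω = k} * laplaceTail n y k := by
  have := hTindep.isProbabilityMeasure
  have hsub : ∀ k, Finset.Icc (k + 1) n ⊆ Finset.Icc 1 n := fun k =>
    Finset.Icc_subset_Icc_left (by omega)
  have hpos : ∀ k, ∀ i ∈ Finset.Icc (k + 1) n, (0 : ℝ) < i := fun k i hi => by
    exact_mod_cast (Nat.succ_pos k).trans_le (Finset.mem_Icc.1 hi).1
  -- `φ k` reads the tail sum off `(T_1, …, T_n)`, the vector that is independent of `K`.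
  let φ : ℕ → (Fin n → ℝ) → ℝ := fun k v =>
    Real.exp (-y * ∑ j ∈ Finset.univ.filter (fun j : Fin n => k ≤ (j : ℕ)), v j)
  have hφ : ∀ k ω, φ k (fun j : Fin n => T (j + 1) ω)
      = Real.exp (-y * ∑ i ∈ Finset.Icc (k + 1) n, T i ω) := fun k ω => by
    simp only [φ, Fin.sum_filter_le_eq_sum_Icc (fun i => T i ω)]
  simp_rw [← hφ]
  rw [integral_comp_eq_sum_of_indepFun (by fun_prop) hKmeas hKindep hKS (fun k _ => ?_) ?_]
  · refine Finset.sum_congr rfl fun k _ => ?_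
    simp_rw [hφ]
    rw [hTindep.integral_exp_neg_mul_sum_of_expMeasure hTmeas (fun i hi => hTexp i (hsub k hi))
      (hpos k) fun i hi => by linarith [hpos k i hi], laplaceTail]
  · intro k _
    simp_rw [hφ]
    exact integrable_exp_neg_mul_sum_of_expMeasure hTmeas (fun i hi => hTexp i (hsub k hi)) hy.le
  · fun_prop

section LaplaceTail

variable {n k : ℕ} {y : ℝ}

lemma laplaceTail_self : laplaceTail n y n = 1 := by
  simp [laplaceTail]

lemma laplaceTail_eq_mul_succ (hk : k < n) :
    laplaceTail n y k = (k + 1) / (k + 1 + y) * laplaceTail n y (k + 1) := by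
  rw [laplaceTail, Finset.prod_Icc_eq_mul_prod_Icc_succ hk, laplaceTail]
  push_cast
  rfl

lemma tendsto_natCast_add_one_mul_laplaceTail_zero (hy : 1 < y) :
    Tendsto (fun n : ℕ => ((n : ℝ) + 1) * laplaceTail n y 0) atTop (𝓝 0) := by
  have hy0 : 0 < y := by linarith
  have hpow : Tendsto (fun n : ℕ => ((n : ℝ) + 1) / (n : ℝ) ^ y) atTop (𝓝 0) := by
    have h := ((tendsto_rpow_neg_atTop (by linarith : 0 < y - 1)).add
      (tendsto_rpow_neg_atTop hy0)).comp tendsto_natCast_atTop_atTop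
    rw [add_zero] at h
    refine h.congr' ?_
    filter_upwards [eventually_gt_atTop 0] with n hn
    have hn' : (0 : ℝ) < n := Nat.cast_pos.2 hn
    simp only [Function.comp, neg_sub, Real.rpow_sub hn', Real.rpow_one, Real.rpow_neg hn'.le]
    field_simp
  have h := hpow.mul (tendsto_rpow_mul_prod_Icc_div_add hy0)
  rw [zero_mul] at h
  refine h.congr' ?_
  filter_upwards [eventually_ne_atTop 0] with n hn
  have : (n : ℝ) ^ y ≠ 0 := by positivity
  simp only [laplaceTail, zero_add]
  field_simp

lemma sum_Icc_laplaceTail_div_eq (hy0 : 0 < y) (hy1 : y ≠ 1) (hn : 2 ≤ n) :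
    ∑ k ∈ Finset.Icc 1 (n - 1), laplaceTail n y k / ((k + 2) * (k + 1))
      = (1 / (n + 1) - laplaceTail n y 1 / 2) / (y - 1) := by
  have : y - 1 ≠ 0 := sub_ne_zero.2 hy1
  -- an antidifference of the summand, found from `laplaceTail_eq_mul_succ`
  set g : ℕ → ℝ := fun k => laplaceTail n y k / ((y - 1) * (k + 1))
  have hstep : ∀ k ∈ Finset.Icc 1 (n - 1),
      laplaceTail n y k / ((k + 2) * (k + 1)) = g (k + 1) - g k := by
    intro k hk
    have hkn : k < n := by have := (Finset.mem_Icc.1 hk).2; omega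
    have : (k : ℝ) + 1 + y ≠ 0 := by positivity
    simp only [g, laplaceTail_eq_mul_succ hkn]
    push_cast
    field_simp
    ring
  rw [Finset.sum_congr rfl hstep, Finset.sum_Icc_sub (by omega : 1 ≤ n - 1) g,
    Nat.sub_add_cancel (by omega : 1 ≤ n)]
  simp only [g, laplaceTail_self]
  push_cast
  field_simp
  ring

lemma natCast_mul_sum_Icc_laplaceTail_eq (hy0 : 0 < y) (hy1 : y ≠ 1) (hn : 2 ≤ n) :
    (n : ℝ) * ∑ k ∈ Finset.Icc 1 (n - 1),
        2 * ((n : ℝ) + 1) / (((n : ℝ) - 1) * ((k : ℝ) + 2) * ((k : ℝ) + 1)) * laplaceTail n y k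
      = 2 / (y - 1) * ((n : ℝ) / (n + -1))
          * (1 - (1 + y) / 2 * (((n : ℝ) + 1) * laplaceTail n y 0)) := by
  have hn1 : (n : ℝ) - 1 ≠ 0 := by
    have : (2 : ℝ) ≤ n := by exact_mod_cast hn
    linarith
  have : y - 1 ≠ 0 := sub_ne_zero.2 hy1
  have hsum : ∑ k ∈ Finset.Icc 1 (n - 1),
        2 * ((n : ℝ) + 1) / (((n : ℝ) - 1) * ((k : ℝ) + 2) * ((k : ℝ) + 1)) * laplaceTail n y k
      = 2 * ((n : ℝ) + 1) / ((n : ℝ) - 1)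
          * ∑ k ∈ Finset.Icc 1 (n - 1), laplaceTail n y k / ((k + 2) * (k + 1)) := by
    rw [Finset.mul_sum]
    refine Finset.sum_congr rfl fun k _ => ?_
    field_simp
  rw [hsum, sum_Icc_laplaceTail_div_eq hy0 hy1 hn, laplaceTail_eq_mul_succ (by omega : 0 < n)]
  push_cast
  rw [← sub_eq_add_neg]
  field_simp
  ring

end LaplaceTail

theorem statement12_general
    (Ω : ℕ → Type*) [∀ n, MeasureSpace (Ω n)]
    (T : ∀ n, ℕ → Ω n → ℝ) (K : ∀ n, Ω n → ℕ)
    (hTmeas : ∀ n i, Measurable (T n i))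
    (hTindep : ∀ n, iIndepFun (T n) ℙ)
    (hTexp : ∀ n, ∀ i ∈ Finset.Icc 1 n, Measure.map (T n i) ℙ = expMeasure i)
    (hKmeas : ∀ n, Measurable (K n))
    (hKrange : ∀ n, 2 ≤ n → ∀ ω, K n ω ∈ Finset.Icc 1 (n - 1))
    (hKindep : ∀ n, IndepFun (fun ω (i : Fin n) => T n (i + 1) ω) (K n) ℙ)
    (hKdist : ∀ n, 2 ≤ n → ∀ k ∈ Finset.Icc 1 (n - 1),
      ℙ {ω | K n ω = k} = ENNReal.ofReal
        (2 * ((n : ℝ) + 1) / (((n : ℝ) - 1) * ((k : ℝ) + 2) * ((k : ℝ) + 1))))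
    (y : ℝ) (hy : 1 < y) :
    Tendsto (fun n : ℕ =>
        (n : ℝ) *
          ∫ ω, Real.exp (-y * ∑ i ∈ Finset.Icc (K n ω + 1) n, T n i ω) ∂ℙ)
      atTop (nhds (2 / (y - 1))) := by
  have hy0 : 0 < y := by linarith
  have hformula : ∀ n : ℕ, 2 ≤ n →
      (n : ℝ) * ∫ ω, Real.exp (-y * ∑ i ∈ Finset.Icc (K n ω + 1) n, T n i ω) ∂ℙ
        = 2 / (y - 1) * ((n : ℝ) / (n + -1))
            * (1 - (1 + y) / 2 * (((n : ℝ) + 1) * laplaceTail n y 0)) := by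
    intro n hn
    have hn1 : (0 : ℝ) < n - 1 := by
      have : (2 : ℝ) ≤ n := by exact_mod_cast hn
      linarith
    rw [integral_exp_neg_mul_sum_Icc_eq_sum_laplaceTail (hTmeas n) (hTindep n) (hTexp n)
      (hKmeas n) (hKindep n) (hKrange n hn) hy0, ← natCast_mul_sum_Icc_laplaceTail_eq hy0 hy.ne' hn]
    congr 1
    refine Finset.sum_congr rfl fun k hk => ?_
    rw [measureReal_def, hKdist n hn k hk, ENNReal.toReal_ofReal (by positivity)]
  have hlim := ((tendsto_natCast_div_add_atTop (-1 : ℝ)).const_mul (2 / (y - 1))).mul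
    (((tendsto_natCast_add_one_mul_laplaceTail_zero hy).const_mul ((1 + y) / 2)).const_sub 1)
  simp only [mul_one, mul_zero, sub_zero] at hlim
  exact hlim.congr' (eventually_atTop.2 ⟨2, fun n hn => (hformula n hn).symm⟩)

/-- For each `n ≥ 2` let `T_1, …, T_n` be independent exponentials of rates
`1, …, n` and `K` an independent index with
`P(K = k) = 2(n+1)/((n−1)(k+2)(k+1))` on `{1, …, n−1}`; set
`τ⁽ⁿ⁾ = T_{K+1} + … + T_n`.  Then for every `y > 1`,
`n · E[e^{−y·τ⁽ⁿ⁾}] → 2/(y−1)` as `n → ∞`. -/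
theorem statement12
    (Ω : ℕ → Type*) [∀ n, MeasureSpace (Ω n)]
    [∀ n, IsProbabilityMeasure (ℙ : Measure (Ω n))]
    (T : ∀ n, ℕ → Ω n → ℝ) (K : ∀ n, Ω n → ℕ)
    (hTmeas : ∀ n i, Measurable (T n i))
    (hTindep : ∀ n, iIndepFun (T n) ℙ)
    (hTexp : ∀ n, ∀ i ∈ Finset.Icc 1 n, Measure.map (T n i) ℙ = expMeasure i)
    (hKmeas : ∀ n, Measurable (K n))
    (hKrange : ∀ n, 2 ≤ n → ∀ ω, K n ω ∈ Finset.Icc 1 (n - 1))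
    (hKindep : ∀ n, IndepFun (fun ω (i : Fin n) => T n (i + 1) ω) (K n) ℙ)
    (hKdist : ∀ n, 2 ≤ n → ∀ k ∈ Finset.Icc 1 (n - 1),
      ℙ {ω | K n ω = k} = ENNReal.ofReal
        (2 * ((n : ℝ) + 1) / (((n : ℝ) - 1) * ((k : ℝ) + 2) * ((k : ℝ) + 1))))
    (y : ℝ) (hy : 1 < y) :
    Tendsto (fun n : ℕ =>
        (n : ℝ) *
          ∫ ω, Real.exp (-y * ∑ i ∈ Finset.Icc (K n ω + 1) n, T n i ω) ∂ℙ)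
      atTop (nhds (2 / (y - 1))) :=
  statement12_general Ω T K hTmeas hTindep hTexp hKmeas hKrange hKindep hKdist y hy
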